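/- arXiv:2407.13091 — 4 statements merged into one kernel-verified Lean document; each statement's English description precedes it below -/
import Mathlib

section
/- (Theorem 3.1, backward direction.) In the one-step MDP causal DAG satisfying assumptions A2–A4, if a_t and s^i_{t+1} are not d-separated by DAIS_t, then there is a direct edge a_t → s^i_{t+1}, i.e., s^i_{t+1} ∈ DAIS_{t+1}. -/
/-- Undirected adjacency underlying a directed graph `E`. -/
def Adj {V : Type*} (E : V → V → Prop) (a b : V) : Prop := E a b ∨ E b a

/-- A simple path between `u` and `v` in the underlying undirected graph of the
digraph `E`, recorded as the list of visited vertices (at least two, no repeats,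
consecutive vertices joined by an edge in one direction or the other). -/
def IsPath {V : Type*} (E : V → V → Prop) (u v : V) (p : List V) : Prop :=
  List.Chain' (Adj E) p ∧ p.head? = some u ∧ p.getLast? = some v ∧
    p.Nodup ∧ 2 ≤ p.length

/-- The intermediate node `b`, whose neighbours on the path are `a` and `c`,
blocks the path with respect to the set `S`: either (i) `b ∈ S` and the edges of
the path at `b` form a chain (`a → b → c` or `a ← b ← c`) or a fork
(`a ← b → c`), or (ii) the edges at `b` form a collider (`a → b ← c`) and
neither `b` nor any descendant of `b` lies in `S`. -/
def BlocksAt {V : Type*} (E : V → V → Prop) (S : Set V) (a b c : V) : Prop :=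
  (b ∈ S ∧ ((E a b ∧ E b c) ∨ (E c b ∧ E b a) ∨ (E b a ∧ E b c))) ∨
  (E a b ∧ E c b ∧ ∀ w, Relation.ReflTransGen E b w → w ∉ S)

/-- A path (given as a list of vertices) is blocked by `S` if some intermediate
node of the path blocks it. -/
def Blocked {V : Type*} (E : V → V → Prop) (S : Set V) (p : List V) : Prop :=
  ∃ (p₁ : List V) (a b c : V) (p₂ : List V),
    p = p₁ ++ a :: b :: c :: p₂ ∧ BlocksAt E S a b c

/-- `u` and `v` are d-separated by `S` iff every path between them is blocked by `S`. -/
def DSep {V : Type*} (E : V → V → Prop) (S : Set V) (u v : V) : Prop :=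
  ∀ p : List V, IsPath E u v p → Blocked E S p

/-- A directed graph is a DAG: no directed cycles (hence in particular no self-loops). -/
def IsDAG {V : Type*} (E : V → V → Prop) : Prop :=
  ∀ v, ¬ Relation.TransGen E v v

/-- Nodes of the one-step MDP causal graph: for each (integer) timestep `t`
there is one action node `a_t` and `d` state nodes `s^1_t, …, s^d_t`. -/
inductive MDPNode (d : ℕ) : Type
  | action : ℤ → MDPNode d
  | state : ℤ → Fin d → MDPNode d

/-- The one-step MDP causal DAG satisfying assumptions A2–A4:
(A2) an edge `s^i_{t} → s^i_{t+1}` for every `i` and `t`;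
(A3/A4) state-to-state edges only go from one timestep to the next
(no long-range edges, no backward edges, no same-timestep edges);
action nodes `a_t` have outgoing edges only to state nodes at timestep `t+1`,
and have no incoming edges. -/
structure MDPGraph (d : ℕ) where
  E : MDPNode d → MDPNode d → Prop
  acyclic : IsDAG E
  a2 : ∀ (t : ℤ) (i : Fin d), E (.state t i) (.state (t + 1) i)
  state_step : ∀ (t t' : ℤ) (i j : Fin d), E (.state t i) (.state t' j) → t' = t + 1
  action_out : ∀ (t : ℤ) (v : MDPNode d), E (.action t) v → ∃ j : Fin d, v = .state (t + 1) j
  no_into_action : ∀ (v : MDPNode d) (t : ℤ), ¬ E v (.action t)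

/-- `DAIS_t`: the set of state nodes at time `t` with a direct edge from `a_{t-1}`. -/
def DAIS {d : ℕ} (G : MDPGraph d) (t : ℤ) : Set (MDPNode d) :=
  {v | ∃ i : Fin d, v = .state t i ∧ G.E (.action (t - 1)) (.state t i)}

/-! Since `a_t` has no incoming edges, every path from `a_t` to `s^i_{t+1}` starts with an edge
`a_t → b` into timestep `t + 1`. Edges raise the timestep by exactly one, so a directed path
from `a_t` that ends at timestep `t + 1` is a single edge. Any other path turns back somewhere,
and its first turn is a collider that descends from `b`; all descendants of `b` live at
timesteps `≥ t + 1`, so none of them lies in `DAIS_t`, and that collider blocks the path. -/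

section Paths

variable {V : Type*} {E : V → V → Prop}

theorem isChain_or_exists_collider {a b : V} (hab : E a b) :
    ∀ {l : List V}, List.IsChain (Adj E) (b :: l) →
      List.IsChain E (a :: b :: l) ∨
      ∃ p₁ x c y p₂, a :: b :: l = p₁ ++ x :: c :: y :: p₂ ∧ E x c ∧ E y c ∧
        Relation.ReflTransGen E b c
  | [], _ => .inl (.cons_cons hab (.singleton b))
  | b' :: l, hch => by
    obtain ⟨hbb' | hb'b, hch⟩ := List.isChain_cons_cons.mp hch
    · rcases isChain_or_exists_collider hbb' hch with hdir | ⟨p₁, x, c, y, p₂, hp, hxc, hyc, hbc⟩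
      · exact .inl (.cons_cons hab hdir)
      · exact .inr ⟨a :: p₁, x, c, y, p₂, by rw [hp, List.cons_append], hxc, hyc, .head hbb' hbc⟩
    · exact .inr ⟨[], a, b, b', l, rfl, hab, hb'b, .refl⟩

theorem blocked_of_not_isChain {S : Set V} {u b : V} {l : List V} (hub : E u b)
    (hch : List.IsChain (Adj E) (b :: l)) (hdir : ¬ List.IsChain E (u :: b :: l))
    (hS : ∀ w, Relation.ReflTransGen E b w → w ∉ S) : Blocked E S (u :: b :: l) := by
  obtain ⟨p₁, x, c, y, p₂, hp, hxc, hyc, hbc⟩ :=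
    (isChain_or_exists_collider hub hch).resolve_left hdir
  exact ⟨p₁, x, c, y, p₂, hp, .inr ⟨hxc, hyc, fun w hcw => hS w (hbc.trans hcw)⟩⟩

end Paths

section Grading

variable {V : Type*} {E : V → V → Prop} {f : V → ℤ}

theorem le_of_reflTransGen_of_edge_succ (hf : ∀ ⦃u v⦄, E u v → f v = f u + 1) {u v : V}
    (h : Relation.ReflTransGen E u v) : f u ≤ f v := by
  induction h with
  | refl => rfl
  | tail _ hvw ih => rw [hf hvw]; omega

theorem eq_add_length_of_isChain_of_edge_succ (hf : ∀ ⦃u v⦄, E u v → f v = f u + 1) :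
    ∀ {x y : V} {l : List V}, List.IsChain E (x :: l) → (x :: l).getLast? = some y →
      f y = f x + l.length
  | x, y, [], _, hy => by simp_all
  | x, y, z :: l, hch, hy => by
    obtain ⟨hxz, hch⟩ := List.isChain_cons_cons.mp hch
    rw [List.getLast?_cons_cons] at hy
    rw [eq_add_length_of_isChain_of_edge_succ hf hch hy, hf hxz, List.length_cons]
    push_cast
    ring

end Grading

namespace MDPNode

def time {d : ℕ} : MDPNode d → ℤ
  | action t => t
  | state t _ => t

end MDPNode

namespace MDPGraph

variable {d : ℕ} (G : MDPGraph d)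

theorem time_edge ⦃u v : MDPNode d⦄ (h : G.E u v) : v.time = u.time + 1 := by
  cases v with
  | action s => exact absurd h (G.no_into_action u s)
  | state s j =>
    cases u with
    | action r => obtain ⟨_, hv⟩ := G.action_out r _ h; cases hv; rfl
    | state r _ => exact G.state_step r s _ j h

theorem edge_of_adj_action {t : ℤ} {v : MDPNode d} (h : Adj G.E (.action t) v) :
    G.E (.action t) v :=
  h.resolve_right (G.no_into_action v t)

theorem time_of_mem_DAIS {t : ℤ} {v : MDPNode d} (h : v ∈ DAIS G t) : v.time = t := by
  obtain ⟨_, rfl, _⟩ := h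
  rfl

theorem dsep_of_not_edge {t : ℤ} {i : Fin d} (hne : ¬ G.E (.action t) (.state (t + 1) i)) :
    DSep G.E (DAIS G t) (.action t) (.state (t + 1) i) := by
  rintro (_ | ⟨u, _ | ⟨b, l⟩⟩) ⟨hch, hhead, hlast, -, hlen⟩
  · simp at hhead
  · simp at hlen
  obtain rfl : u = .action t := Option.some.inj hhead
  obtain ⟨hadj, hch⟩ := List.isChain_cons_cons.mp hch
  have hab := G.edge_of_adj_action hadj
  by_cases hdir : List.IsChain G.E (.action t :: b :: l)
  · have htime := eq_add_length_of_isChain_of_edge_succ G.time_edge hdir hlast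
    simp only [MDPNode.time, List.length_cons] at htime
    obtain rfl : l = [] := List.eq_nil_of_length_eq_zero (by omega)
    simp only [List.getLast?_cons_cons, List.getLast?_singleton, Option.some.injEq] at hlast
    exact absurd (hlast ▸ hab) hne
  · refine blocked_of_not_isChain hab hch hdir fun w hbw hw => ?_
    have := le_of_reflTransGen_of_edge_succ G.time_edge hbw
    rw [G.time_edge hab, G.time_of_mem_DAIS hw] at this
    simp [MDPNode.time] at this

end MDPGraph

/-- Theorem 3.1, backward direction: in the one-step MDP causal DAG (A2–A4), if
`a_t` and `s^i_{t+1}` are not d-separated by `DAIS_t`, then there is a direct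
edge `a_t → s^i_{t+1}`, i.e. `s^i_{t+1} ∈ DAIS_{t+1}`. -/
theorem dais_backward {d : ℕ} (G : MDPGraph d) (t : ℤ) (i : Fin d)
    (h : ¬ DSep G.E (DAIS G t) (.action t) (.state (t + 1) i)) :
    G.E (.action t) (.state (t + 1) i) ∧
      MDPNode.state (t + 1) i ∈ DAIS G (t + 1) := by
  have hedge : G.E (.action t) (.state (t + 1) i) := not_not.mp (mt G.dsep_of_not_edge h)
  exact ⟨hedge, i, rfl, by simpa using hedge⟩
end

section
/- (Theorem 3.1, full statement.) In the one-step MDP causal DAG satisfying assumptions A2–A4, the state node s^i_{t+1} belongs to DAIS_{t+1} if and only if a_t and s^i_{t+1} are not d-separated by DAIS_t in the graph; equivalently, under the global Markov condition and faithfulness, s^i_{t+1} ∈ DAIS_{t+1} if and only if a_t and s^i_{t+1} are conditionally dependent given DAIS_t. -/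
/-- The timestep of a node. -/
def ntime {d : ℕ} : MDPNode d → ℤ
  | .action t => t
  | .state t _ => t

lemma edge_time {d : ℕ} (G : MDPGraph d) {u v : MDPNode d} (h : G.E u v) :
    ntime v = ntime u + 1 := by
  cases u with
  | action t =>
      obtain ⟨j, rfl⟩ := G.action_out t v h
      rfl
  | state t i =>
      cases v with
      | action t' => exact absurd h (G.no_into_action _ _)
      | state t' j => simpa [ntime] using G.state_step t t' i j h

lemma desc_time {d : ℕ} (G : MDPGraph d) {u w : MDPNode d}
    (h : Relation.ReflTransGen G.E u w) : ntime u ≤ ntime w := by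
  induction h with
  | refl => exact le_refl _
  | tail _ h ih => have := edge_time G h; omega

lemma aux_block {d : ℕ} (G : MDPGraph d) (S : Set (MDPNode d)) (T : ℤ)
    (hS : ∀ v ∈ S, ntime v ≤ T) :
    ∀ (r : List (MDPNode d)) (x y z e : MDPNode d),
      G.E x y → T < ntime y →
      List.Chain' (Adj G.E) (y :: z :: r) →
      (z :: r).getLast? = some e → ntime e ≤ ntime y →
      ∃ p₁ a b c p₂, x :: y :: z :: r = p₁ ++ a :: b :: c :: p₂ ∧
        BlocksAt G.E S a b c := by
  intro r
  induction r with
  | nil =>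
      intro x y z e hxy hTy hchain hlast hle
      have hadj : Adj G.E y z := (List.isChain_cons_cons.mp hchain).1
      rcases hadj with hyz | hzy
      · have h1 := edge_time G hyz
        have h2 : z = e := by simpa using hlast
        subst h2
        omega
      · exact ⟨[], x, y, z, [], rfl, Or.inr ⟨hxy, hzy, fun w hw hwS => by
          have h1 := desc_time G hw
          have h2 := hS w hwS
          omega⟩⟩
  | cons w r' ih =>
      intro x y z e hxy hTy hchain hlast hle
      have hadj : Adj G.E y z := (List.isChain_cons_cons.mp hchain).1
      rcases hadj with hyz | hzy
      · have hz : ntime z = ntime y + 1 := edge_time G hyz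
        have hchain' : List.Chain' (Adj G.E) (z :: w :: r') :=
          (List.isChain_cons_cons.mp hchain).2
        have hlast' : (w :: r').getLast? = some e := by
          rwa [List.getLast?_cons_cons] at hlast
        obtain ⟨p₁, a, b, c, p₂, heq, hb⟩ :=
          ih y z w e hyz (by omega) hchain' hlast' (by omega)
        exact ⟨x :: p₁, a, b, c, p₂, by rw [List.cons_append, ← heq], hb⟩
      · exact ⟨[], x, y, z, w :: r', rfl, Or.inr ⟨hxy, hzy, fun v hv hvS => by
          have h1 := desc_time G hv
          have h2 := hS v hvS
          omega⟩⟩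

lemma dsep_of_notMem {d : ℕ} (G : MDPGraph d) (t : ℤ) (i : Fin d)
    (hmem : MDPNode.state (t + 1) i ∉ DAIS G (t + 1)) :
    DSep G.E (DAIS G t) (.action t) (.state (t + 1) i) := by
  rintro p ⟨hchain, hhead, hlast, hnodup, hlen⟩
  rcases p with _ | ⟨x0, q⟩
  · simp at hhead
  · have hx0 : x0 = .action t := by simpa using hhead
    subst hx0
    rcases q with _ | ⟨y, r⟩
    · simp at hlen
    · have hadj : Adj G.E (.action t) y := (List.isChain_cons_cons.mp hchain).1
      have hEy : G.E (.action t) y := by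
        rcases hadj with h | h
        · exact h
        · exact absurd h (G.no_into_action _ _)
      obtain ⟨j, rfl⟩ := G.action_out t y hEy
      rcases r with _ | ⟨z, r'⟩
      · have : MDPNode.state (t + 1) j = MDPNode.state (t + 1) i := by
          simpa using hlast
        have hj : j = i := by injection this with h1 h2
        subst hj
        exact absurd ⟨j, rfl, by simpa using hEy⟩ hmem
      ·
          obtain ⟨p₁, a, b, c, p₂, heq, hb⟩ :=
            aux_block G (DAIS G t) t
              (by rintro v ⟨k, rfl, -⟩; simp [ntime])
              r' (.action t) (.state (t + 1) j) z (.state (t + 1) i)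
              hEy (by simp [ntime])
              ((List.isChain_cons_cons.mp hchain).2)
              (by rwa [List.getLast?_cons_cons, List.getLast?_cons_cons] at hlast)
              (by simp [ntime])
          exact ⟨p₁, a, b, c, p₂, heq, hb⟩

/-- Theorem 3.1, full statement: in the one-step MDP causal DAG (A2–A4), the
state node `s^i_{t+1}` belongs to `DAIS_{t+1}` iff `a_t` and `s^i_{t+1}` are not
d-separated by `DAIS_t`; equivalently, under the global Markov condition and
faithfulness (conditional independence `CI` coincides with d-separation),
`s^i_{t+1} ∈ DAIS_{t+1}` iff `a_t` and `s^i_{t+1}` are conditionally dependent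
given `DAIS_t`. -/
theorem dais_iff {d : ℕ} (G : MDPGraph d) (t : ℤ) (i : Fin d)
    (CI : MDPNode d → MDPNode d → Set (MDPNode d) → Prop)
    (hCI : ∀ u v S, CI u v S ↔ DSep G.E S u v) :
    (MDPNode.state (t + 1) i ∈ DAIS G (t + 1) ↔
        ¬ DSep G.E (DAIS G t) (.action t) (.state (t + 1) i)) ∧
      (MDPNode.state (t + 1) i ∈ DAIS G (t + 1) ↔
        ¬ CI (.action t) (.state (t + 1) i) (DAIS G t)) := by
  have key : MDPNode.state (t + 1) i ∈ DAIS G (t + 1) ↔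
      ¬ DSep G.E (DAIS G t) (.action t) (.state (t + 1) i) := by
    constructor
    · rintro ⟨j, hj, hE⟩ hsep
      have hj' : j = i := by injection hj with h1 h2; exact h2.symm
      subst hj'
      have hE' : G.E (.action t) (.state (t + 1) j) := by simpa using hE
      have hpath : IsPath G.E (.action t) (.state (t + 1) j)
          [.action t, .state (t + 1) j] := by
        refine ⟨?_, rfl, rfl, ?_, by simp⟩
        · exact List.isChain_cons_cons.mpr ⟨Or.inl hE', List.isChain_singleton _⟩
        · simp
      obtain ⟨p₁, a, b, c, p₂, heq, -⟩ := hsep _ hpath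
      have := congrArg List.length heq
      simp at this
      omega
    · intro h
      by_contra hmem
      exact h (dsep_of_notMem G t i hmem)
  exact ⟨key, by rw [hCI]; exact key⟩
end

section
/- (Intermediate claim in the proof of Theorem 3.1, backward direction.) In the one-step MDP causal DAG satisfying assumptions A2–A4, every path between a_t and s^i_{t+1} other than the single-edge path a_t → s^i_{t+1} is blocked by DAIS_t; that is, the only path between a_t and s^i_{t+1} that can remain unblocked given DAIS_t is the direct edge from a_t to s^i_{t+1}. -/
namespace OnlyDirectAux

/-- The timestep of a node. -/
def tme {d : ℕ} : MDPNode d → ℤ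
  | .action s => s
  | .state s _ => s

lemma edge_tme {d : ℕ} (G : MDPGraph d) {u v : MDPNode d} (h : G.E u v) :
    tme v = tme u + 1 := by
  cases u with
  | action s =>
    obtain ⟨j, rfl⟩ := G.action_out s v h
    rfl
  | state s i =>
    cases v with
    | action s' => exact absurd h (G.no_into_action _ _)
    | state s' j => simpa [tme] using G.state_step s s' i j h

lemma rtg_tme {d : ℕ} (G : MDPGraph d) {u w : MDPNode d}
    (h : Relation.ReflTransGen G.E u w) : tme u ≤ tme w := by
  induction h with
  | refl => exact le_refl _
  | tail _ h2 ih => have := edge_tme G h2; omega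

end OnlyDirectAux

open OnlyDirectAux in
/-- Intermediate claim in the proof of Theorem 3.1, backward direction: in the
one-step MDP causal DAG (A2–A4), every path between `a_t` and `s^i_{t+1}` other
than the single-edge path `a_t → s^i_{t+1}` is blocked by `DAIS_t`. -/
theorem only_direct_edge_unblocked {d : ℕ} (G : MDPGraph d) (t : ℤ) (i : Fin d) :
    ∀ p : List (MDPNode d), IsPath G.E (.action t) (.state (t + 1) i) p →
      p ≠ [MDPNode.action t, MDPNode.state (t + 1) i] →
      Blocked G.E (DAIS G t) p := by
  classical
  intro p hp hne
  obtain ⟨hchain, hhead, hlast, hnodup, hlen⟩ := hp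
  set dflt : MDPNode d := MDPNode.action 0 with hdflt
  set v : ℕ → MDPNode d := fun k => p.getD k dflt with hv
  set n := p.length with hn
  -- the path has at least 3 vertices
  have hn3 : 3 ≤ n := by
    rcases p with _ | ⟨x, _ | ⟨y, _ | ⟨z, q⟩⟩⟩
    · simp [hn] at hlen
    · simp [hn] at hlen
    · exfalso
      simp only [List.head?] at hhead
      have hx : x = MDPNode.action t := by injection hhead
      have hy : y = MDPNode.state (t + 1) i := by
        have := hlast
        simp only [List.getLast?_eq_getElem?] at this
        simp at this
        exact this
      exact hne (by rw [hx, hy])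
    · simp [hn]
  have hvd : ∀ k, k < n → ∀ (h : k < p.length), v k = p[k] := by
    intro k hk h
    simp only [hv]
    exact List.getD_eq_getElem _ _ h
  -- adjacent vertices are joined by an edge
  have hadj : ∀ k, k + 1 < n → Adj G.E (v k) (v (k + 1)) := by
    intro k hk
    have h1 : k < p.length := by omega
    have h2 : k + 1 < p.length := by omega
    have := List.isChain_iff_getElem.mp hchain k (by omega)
    rw [hvd k (by omega) h1, hvd (k+1) (by omega) h2]
    simpa [List.get_eq_getElem] using this
  have hstep : ∀ k, k + 1 < n →
      tme (v (k+1)) = tme (v k) + 1 ∨ tme (v k) = tme (v (k+1)) + 1 := by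
    intro k hk
    rcases hadj k hk with h | h
    · exact Or.inl (edge_tme G h)
    · exact Or.inr (edge_tme G h)
  -- endpoints
  have hv0 : v 0 = MDPNode.action t := by
    have h0 : 0 < p.length := by omega
    rw [hvd 0 (by omega) h0]
    have h1 : p.head? = some p[0] := by
      rw [List.head?_eq_getElem?, List.getElem?_eq_getElem h0]
    rw [h1] at hhead
    exact Option.some_injective _ hhead
  have hvlast : v (n - 1) = MDPNode.state (t + 1) i := by
    have h0 : n - 1 < p.length := by omega
    rw [hvd (n-1) (by omega) h0]
    have h1 : p.getLast? = some p[n - 1] := by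
      rw [List.getLast?_eq_getElem?, ← hn]
      exact List.getElem?_eq_getElem h0
    rw [h1] at hlast
    exact Option.some_injective _ hlast
  have hT1 : tme (v 1) = t + 1 := by
    rcases hadj 0 (by omega) with h | h
    · have := edge_tme G h; rw [hv0] at this; simpa [tme] using this
    · rw [hv0] at h; exact absurd h (G.no_into_action _ _)
  have hTn : tme (v (n - 1)) = t + 1 := by rw [hvlast]; rfl
  -- pick the earliest index (≥ 1) at which the timestep is maximal
  have hex : ∃ k, (1 ≤ k ∧ k < n) ∧ ∀ j, 1 ≤ j → j < n → tme (v j) ≤ tme (v k) := by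
    obtain ⟨b, hb, hmax⟩ := Finset.exists_max_image (Finset.Ico 1 n)
      (fun k => tme (v k)) ⟨1, Finset.mem_Ico.mpr ⟨le_refl 1, by omega⟩⟩
    refine ⟨b, ?_, fun j h1 h2 => hmax j (Finset.mem_Ico.mpr ⟨h1, h2⟩)⟩
    simpa using Finset.mem_Ico.mp hb
  have hspec := Nat.find_spec hex
  set m := Nat.find hex with hmdef
  obtain ⟨⟨hm1, hm2⟩, hmax⟩ := hspec
  have hTmax : t + 1 ≤ tme (v m) := by
    have := hmax 1 (le_refl 1) (by omega)
    omega
  -- m is an interior index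
  have hmn : m + 1 < n := by
    by_contra hcon
    have hmeq : m = n - 1 := by omega
    have hTm : tme (v m) = t + 1 := by rw [hmeq]; exact hTn
    have h1P : (1 ≤ 1 ∧ 1 < n) ∧ ∀ j, 1 ≤ j → j < n → tme (v j) ≤ tme (v 1) := by
      refine ⟨⟨le_refl 1, by omega⟩, fun j hj1 hj2 => ?_⟩
      calc tme (v j) ≤ tme (v m) := hmax j hj1 hj2
        _ = tme (v 1) := by rw [hTm, hT1]
    have := Nat.find_le (h := hex) h1P
    omega
  -- strict local maximum
  have hleft : tme (v (m - 1)) < tme (v m) := by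
    rcases Nat.lt_or_ge m 2 with h1 | h1
    · have hm1' : m = 1 := by omega
      rw [hm1']
      simp only [Nat.sub_self]
      rw [hv0]
      show t < tme (v 1)
      omega
    · have hle := hmax (m - 1) (by omega) (by omega)
      rcases lt_or_eq_of_le hle with h | h
      · exact h
      · exfalso
        have hP : (1 ≤ m - 1 ∧ m - 1 < n) ∧
            ∀ j, 1 ≤ j → j < n → tme (v j) ≤ tme (v (m - 1)) := by
          refine ⟨⟨by omega, by omega⟩, fun j hj1 hj2 => ?_⟩
          rw [h]; exact hmax j hj1 hj2
        exact Nat.find_min hex (by omega : m - 1 < m) hP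
  have hright : tme (v (m + 1)) < tme (v m) := by
    have hle := hmax (m + 1) (by omega) hmn
    rcases hstep m hmn with h | h <;> omega
  -- edge directions: collider at v m
  have hEab : G.E (v (m - 1)) (v m) := by
    have hadjm : Adj G.E (v (m - 1)) (v m) := by
      have := hadj (m - 1) (by omega)
      rwa [Nat.sub_add_cancel hm1] at this
    rcases hadjm with h | h
    · exact h
    · have := edge_tme G h; omega
  have hEcb : G.E (v (m + 1)) (v m) := by
    rcases hadj m hmn with h | h
    · have := edge_tme G h; omega
    · exact h
  -- decomposition of the path around v m
  have hm1lt : m - 1 < p.length := by omega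
  have hmlt : m < p.length := by omega
  have hm2lt : m + 1 < p.length := by omega
  have hdecomp : p = p.take (m - 1) ++ v (m - 1) :: v m :: v (m + 1) :: p.drop (m + 2) := by
    have e1 : p.drop (m - 1) = v (m - 1) :: p.drop m := by
      rw [List.drop_eq_getElem_cons hm1lt, Nat.sub_add_cancel hm1,
        hvd (m - 1) (by omega) hm1lt]
    have e2 : p.drop m = v m :: p.drop (m + 1) := by
      rw [List.drop_eq_getElem_cons hmlt, hvd m (by omega) hmlt]
    have e3 : p.drop (m + 1) = v (m + 1) :: p.drop (m + 2) := by
      rw [List.drop_eq_getElem_cons hm2lt, hvd (m + 1) (by omega) hm2lt]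
    conv_lhs => rw [← List.take_append_drop (m - 1) p]
    rw [e1, e2, e3]
  refine ⟨p.take (m - 1), v (m - 1), v m, v (m + 1), p.drop (m + 2), hdecomp, ?_⟩
  refine Or.inr ⟨hEab, hEcb, ?_⟩
  intro w hw hwS
  obtain ⟨j, rfl, _⟩ := hwS
  have h1 := rtg_tme G hw
  have h2 : tme (MDPNode.state t j) = (t : ℤ) := rfl
  omega
end

section
/- (Theorem 3.3, identifiability of the causal structure, graph-theoretic form.) Let G and G' be two DAGs on the same vertex set consisting of d state nodes s^1_t, …, s^d_t at time t, one action node a_t, and d state nodes s^1_{t+1}, …, s^d_{t+1} at time t+1, in which every edge goes from a node in {s^1_t, …, s^d_t, a_t} to a node in {s^1_{t+1}, …, s^d_{t+1}} (no edges within a timestep, no backward edges, and no edges into a_t). If G and G' induce exactly the same d-separation relations among the vertices, then G and G' have exactly the same edge set; in particular, the structural masks M_{s→s} (recording edges s^i_t → s^j_{t+1}) and M_{a→s} (recording edges a_t → s^j_{t+1}) are uniquely determined by the d-separation relations. -/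
/-- Nodes of the two-timestep causal graph of Theorem 3.3: `d` state nodes at
time `t`, one action node `a_t`, and `d` state nodes at time `t+1`. -/
inductive TwoStepNode (d : ℕ) : Type
  | state0 : Fin d → TwoStepNode d
  | action : TwoStepNode d
  | state1 : Fin d → TwoStepNode d


/-! In a graph whose edges all run from a first layer to a second one, no vertex has both an
incoming and an outgoing edge. So along a path that leaves a first-layer vertex `u`, the second
vertex is entered from `u` and from its other neighbour: a collider, which the empty set blocks.
Hence `u` and `v` are d-separated by `∅` exactly when there is no edge `u → v`, and the d-separation
relations determine every edge. -/

section DSeparation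

variable {V : Type*} {E : V → V → Prop}

theorem not_dsep_of_adj {S : Set V} {u v : V} (huv : u ≠ v) (h : Adj E u v) :
    ¬ DSep E S u v := by
  intro hsep
  have hpath : IsPath E u v [u, v] :=
    ⟨List.isChain_pair.mpr h, rfl, rfl, by simpa using huv, le_rfl⟩
  obtain ⟨p₁, a, b, c, p₂, hp, -⟩ := hsep [u, v] hpath
  have hlen := congrArg List.length hp
  simp only [List.length_append, List.length_cons, List.length_nil] at hlen
  omega

theorem dsep_empty_of_not_edge (hE : ∀ a b c, E a b → ¬ E b c) {u v : V}
    (hu : ∀ w, ¬ E w u) (huv : ¬ E u v) : DSep E ∅ u v := by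
  rintro (_ | ⟨x, _ | ⟨y, _ | ⟨z, rest⟩⟩⟩) ⟨hchain, hhead, hlast, -, hlen⟩
  · simp at hlen
  · simp at hlen
  · obtain rfl : x = u := by simpa using hhead
    obtain rfl : y = v := by simpa using hlast
    rcases List.isChain_pair.mp hchain with h | h
    exacts [(huv h).elim, (hu y h).elim]
  · obtain rfl : x = u := by simpa using hhead
    obtain ⟨hxy, hyz, -⟩ := List.isChain_cons_cons.mp hchain |>.imp_right List.isChain_cons_cons.mp
    have hExy : E x y := hxy.resolve_right (hu y)
    have hEzy : E z y := hyz.resolve_left (hE x y z hExy)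
    exact ⟨[], x, y, z, rest, rfl, Or.inr ⟨hExy, hEzy, fun _ _ => Set.notMem_empty _⟩⟩

theorem dsep_empty_iff_not_edge (hE : ∀ a b c, E a b → ¬ E b c) {u v : V}
    (hu : ∀ w, ¬ E w u) : DSep E ∅ u v ↔ ¬ E u v :=
  ⟨fun hsep h => not_dsep_of_adj (fun huv => hu u (by subst huv; exact h)) (Or.inl h) hsep,
    dsep_empty_of_not_edge hE hu⟩

theorem edge_iff_of_dsep_empty_iff {E' : V → V → Prop} (hE : ∀ a b c, E a b → ¬ E b c)
    (hE' : ∀ a b c, E' a b → ¬ E' b c) {u v : V} (hu : ∀ w, ¬ E w u) (hu' : ∀ w, ¬ E' w u)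
    (hsep : DSep E ∅ u v ↔ DSep E' ∅ u v) : E u v ↔ E' u v := by
  rwa [← not_iff_not, ← dsep_empty_iff_not_edge hE hu, ← dsep_empty_iff_not_edge hE' hu']

end DSeparation

namespace TwoStepNode

variable {d : ℕ} {E : TwoStepNode d → TwoStepNode d → Prop}

def IsLayered (E : TwoStepNode d → TwoStepNode d → Prop) : Prop :=
  ∀ u v, E u v → ((∃ i, u = .state0 i) ∨ u = .action) ∧ (∃ j, v = .state1 j)

theorem IsLayered.not_edge_from_state1 (hE : IsLayered E) (j : Fin d) (v : TwoStepNode d) :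
    ¬ E (.state1 j) v := by
  intro h
  rcases (hE _ _ h).1 with ⟨i, hi⟩ | hi <;> cases hi

theorem IsLayered.not_edge_to {u : TwoStepNode d} (hE : IsLayered E) (hu : ∀ j, u ≠ .state1 j)
    (w : TwoStepNode d) : ¬ E w u := by
  intro h
  obtain ⟨j, rfl⟩ := (hE _ _ h).2
  exact hu j rfl

theorem IsLayered.not_edge_edge (hE : IsLayered E) (a b c : TwoStepNode d) (hab : E a b) :
    ¬ E b c := by
  obtain ⟨j, rfl⟩ := (hE _ _ hab).2
  exact hE.not_edge_from_state1 j c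

theorem IsLayered.edge_iff {E' : TwoStepNode d → TwoStepNode d → Prop} (hE : IsLayered E)
    (hE' : IsLayered E') (hsep : ∀ u v, DSep E ∅ u v ↔ DSep E' ∅ u v) (u v : TwoStepNode d) :
    E u v ↔ E' u v := by
  by_cases hu : ∃ j, u = .state1 j
  · obtain ⟨j, rfl⟩ := hu
    exact iff_of_false (hE.not_edge_from_state1 j v) (hE'.not_edge_from_state1 j v)
  · simp only [not_exists] at hu
    exact edge_iff_of_dsep_empty_iff hE.not_edge_edge hE'.not_edge_edge (hE.not_edge_to hu)
      (hE'.not_edge_to hu) (hsep u v)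

end TwoStepNode

theorem causal_structure_identifiable_general {d : ℕ}
    (E E' : TwoStepNode d → TwoStepNode d → Prop)
    (hlayer : ∀ u v, E u v →
      ((∃ i, u = .state0 i) ∨ u = .action) ∧ (∃ j, v = .state1 j))
    (hlayer' : ∀ u v, E' u v →
      ((∃ i, u = .state0 i) ∨ u = .action) ∧ (∃ j, v = .state1 j))
    (hsep : ∀ (S : Set (TwoStepNode d)) (u v : TwoStepNode d),
      u ∉ S → v ∉ S → (DSep E S u v ↔ DSep E' S u v)) :
    (∀ u v, E u v ↔ E' u v) ∧
      (∀ i j : Fin d, E (.state0 i) (.state1 j) ↔ E' (.state0 i) (.state1 j)) ∧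
      (∀ j : Fin d, E .action (.state1 j) ↔ E' .action (.state1 j)) := by
  have hedge : ∀ u v, E u v ↔ E' u v :=
    TwoStepNode.IsLayered.edge_iff hlayer hlayer' fun u v =>
      hsep ∅ u v (Set.notMem_empty u) (Set.notMem_empty v)
  exact ⟨hedge, fun _ _ => hedge _ _, fun _ => hedge _ _⟩

/-- Theorem 3.3 (identifiability of the causal structure, graph-theoretic form):
if two DAGs on the node set `{s^1_t, …, s^d_t, a_t, s^1_{t+1}, …, s^d_{t+1}}`,
in which every edge goes from a node in `{s^1_t, …, s^d_t, a_t}` to a node in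
`{s^1_{t+1}, …, s^d_{t+1}}`, induce exactly the same d-separation relations,
then they have exactly the same edge set; in particular the structural masks
`M_{s→s}` and `M_{a→s}` are uniquely determined by the d-separation relations. -/
theorem causal_structure_identifiable {d : ℕ}
    (E E' : TwoStepNode d → TwoStepNode d → Prop)
    (hdag : IsDAG E) (hdag' : IsDAG E')
    (hlayer : ∀ u v, E u v →
      ((∃ i, u = .state0 i) ∨ u = .action) ∧ (∃ j, v = .state1 j))
    (hlayer' : ∀ u v, E' u v →
      ((∃ i, u = .state0 i) ∨ u = .action) ∧ (∃ j, v = .state1 j))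
    (hsep : ∀ (S : Set (TwoStepNode d)) (u v : TwoStepNode d),
      u ∉ S → v ∉ S → (DSep E S u v ↔ DSep E' S u v)) :
    (∀ u v, E u v ↔ E' u v) ∧
      (∀ i j : Fin d, E (.state0 i) (.state1 j) ↔ E' (.state0 i) (.state1 j)) ∧
      (∀ j : Fin d, E .action (.state1 j) ↔ E' .action (.state1 j)) :=
  causal_structure_identifiable_general E E' hlayer hlayer' hsep
end
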